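/- (Binomial moments.) Let q be a real number with q > 0 and q ≠ 1, and let σ_q = (1/√q)·[[1, q−1],[1, −1]]. Suppose W(x,y) = Σ_{i=0}^n A_i x^{n−i} y^i ∈ ℂ[x,y] with A₀ = 1 is σ_q-invariant, i.e., W(( x + (q−1)y )/√q, ( x − y )/√q) = W(x,y). Then for every ν = 0, 1, …, n: Σ_{i=0}^{n−ν} C(n−i, ν)·A_i = q^{n/2−ν}·Σ_{i=0}^{ν} C(n−i, n−ν)·A_i. -/

import Mathlib

noncomputable section

abbrev Cxy : Type := MvPolynomial (Fin 2) ℂ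

/-- The action of `σ_q = (1/√q)[[1,q-1],[1,-1]]`: substitute
`x ↦ (x+(q-1)y)/√q`, `y ↦ (x-y)/√q`. -/
def actSigma (q : ℝ) (f : Cxy) : Cxy :=
  MvPolynomial.aeval
    ![MvPolynomial.C ((Real.sqrt q : ℂ))⁻¹ *
        (MvPolynomial.X 0 + MvPolynomial.C ((q : ℂ) - 1) * MvPolynomial.X 1),
      MvPolynomial.C ((Real.sqrt q : ℂ))⁻¹ * (MvPolynomial.X 0 - MvPolynomial.X 1)] f

/-!
Put `x = t + 1`, `y = 1`. Since `W` is homogeneous of degree `n`, invariance under `σ_q` becomes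
the identity `q^(-n/2) ∑ A_i (t + q)^(n-i) t^i = ∑ A_i (t + 1)^(n-i)` in `ℂ[t]`, and comparing the
coefficients of `t^ν` on both sides gives the binomial moment identity.
-/

open Finset Polynomial

section Coefficients

variable {R : Type*} [CommSemiring R]

theorem coeff_X_add_C_pow_sub_mul_X_pow (c : R) {n i ν : ℕ} (hi : i ≤ ν) (hν : ν ≤ n) :
    ((X + C c) ^ (n - i) * X ^ i).coeff ν = c ^ (n - ν) * ((n - i).choose (n - ν) : R) := by
  rw [coeff_mul_X_pow', if_pos hi, coeff_X_add_C_pow, ← Nat.choose_symm (by omega : ν - i ≤ n - i),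
    show n - i - (ν - i) = n - ν by omega]

theorem coeff_sum_C_mul_X_add_C_pow_sub_mul_X_pow (A : ℕ → R) (c : R) {n ν : ℕ} (hν : ν ≤ n) :
    (∑ i ∈ range (n + 1), C (A i) * (X + C c) ^ (n - i) * X ^ i).coeff ν
      = c ^ (n - ν) * ∑ i ∈ range (ν + 1), ((n - i).choose (n - ν) : R) * A i := by
  rw [finsetSum_coeff, mul_sum,
    ← sum_subset (range_subset_range.mpr (by omega : ν + 1 ≤ n + 1))]
  · refine sum_congr rfl fun i hi => ?_
    rw [mul_assoc, coeff_C_mul,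
      coeff_X_add_C_pow_sub_mul_X_pow c (Nat.lt_succ_iff.mp (mem_range.mp hi)) hν]
    ring
  · intro i _ hi
    rw [mul_assoc, coeff_C_mul, coeff_mul_X_pow', if_neg (by simp only [mem_range] at hi; omega), mul_zero]

theorem coeff_sum_C_mul_X_add_one_pow_sub (A : ℕ → R) (n ν : ℕ) :
    (∑ i ∈ range (n + 1), C (A i) * (X + 1) ^ (n - i)).coeff ν
      = ∑ i ∈ range (n - ν + 1), ((n - i).choose ν : R) * A i := by
  rw [finsetSum_coeff, ← sum_subset (range_subset_range.mpr (by omega : n - ν + 1 ≤ n + 1))]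
  · exact sum_congr rfl fun i _ => by rw [coeff_C_mul, coeff_X_add_one_pow, mul_comm]
  · intro i hin hi
    rw [coeff_C_mul, coeff_X_add_one_pow,
      Nat.choose_eq_zero_of_lt (by simp only [mem_range] at hin hi; omega),
      Nat.cast_zero, mul_zero]

end Coefficients

section BinaryForm

variable {R S : Type*} [CommSemiring R] [CommSemiring S] [Algebra R S]

def binaryForm (n : ℕ) (A : ℕ → R) : MvPolynomial (Fin 2) R :=
  ∑ i ∈ range (n + 1), MvPolynomial.C (A i) * MvPolynomial.X 0 ^ (n - i) * MvPolynomial.X 1 ^ i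

theorem aeval_binaryForm (n : ℕ) (A : ℕ → R) (u v : S) :
    MvPolynomial.aeval ![u, v] (binaryForm n A)
      = ∑ i ∈ range (n + 1), algebraMap R S (A i) * u ^ (n - i) * v ^ i := by
  simp [binaryForm]

theorem aeval_binaryForm_mul (n : ℕ) (A : ℕ → R) (c u v : S) :
    MvPolynomial.aeval ![c * u, c * v] (binaryForm n A)
      = c ^ n * MvPolynomial.aeval ![u, v] (binaryForm n A) := by
  rw [aeval_binaryForm, aeval_binaryForm, mul_sum]
  refine sum_congr rfl fun i hi => ?_
  rw [mul_pow, mul_pow, ← pow_sub_mul_pow c (Nat.lt_succ_iff.mp (mem_range.mp hi))]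
  ring

end BinaryForm

theorem aeval_actSigma {S : Type*} [CommRing S] [Algebra ℂ S] (q : ℝ) (f : Cxy) (u v : S) :
    MvPolynomial.aeval ![u, v] (actSigma q f)
      = MvPolynomial.aeval
          ![algebraMap ℂ S (Real.sqrt q : ℂ)⁻¹ * (u + algebraMap ℂ S ((q : ℂ) - 1) * v),
            algebraMap ℂ S (Real.sqrt q : ℂ)⁻¹ * (u - v)] f := by
  rw [actSigma, MvPolynomial.comp_aeval_apply]
  congr 2
  funext i
  fin_cases i <;> simp

theorem inv_sqrt_pow_mul_pow_sub {q : ℝ} (hq : 0 < q) {n ν : ℕ} (hν : ν ≤ n) :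
    (Real.sqrt q)⁻¹ ^ n * q ^ (n - ν) = q ^ ((n : ℝ) / 2 - ν) := by
  rw [Real.sqrt_eq_rpow, ← Real.rpow_neg hq.le, ← Real.rpow_natCast, ← Real.rpow_mul hq.le,
    ← Real.rpow_natCast q, ← Real.rpow_add hq, Nat.cast_sub hν]
  ring_nf

theorem binomial_moments_general (q : ℝ) (hq0 : 0 < q) (n : ℕ)
    (A : ℕ → ℂ) (W : Cxy)
    (hW : W = ∑ i ∈ Finset.range (n + 1),
      MvPolynomial.C (A i) * MvPolynomial.X 0 ^ (n - i) * MvPolynomial.X 1 ^ i)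
    (hinv : actSigma q W = W) :
    ∀ ν ≤ n,
      ∑ i ∈ Finset.range (n - ν + 1), ((n - i).choose ν : ℂ) * A i
        = ((q ^ ((n : ℝ) / 2 - (ν : ℝ)) : ℝ) : ℂ) *
            ∑ i ∈ Finset.range (ν + 1), ((n - i).choose (n - ν) : ℂ) * A i := by
  intro ν hν
  replace hinv : actSigma q (binaryForm n A) = binaryForm n A := by subst hW; exact hinv
  have hspec : C ((Real.sqrt q : ℂ)⁻¹) ^ n *
        ∑ i ∈ range (n + 1), C (A i) * (X + C (q : ℂ)) ^ (n - i) * X ^ i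
      = ∑ i ∈ range (n + 1), C (A i) * (X + 1) ^ (n - i) := by
    have h := congrArg (MvPolynomial.aeval ![(X : ℂ[X]) + 1, 1]) hinv
    have hx : X + 1 + C ((q : ℂ) - 1) * 1 = X + C (q : ℂ) := by rw [map_sub, map_one]; ring
    rw [aeval_actSigma, algebraMap_eq, hx, add_sub_cancel_right, aeval_binaryForm_mul,
      aeval_binaryForm, aeval_binaryForm] at h
    simpa only [algebraMap_eq, one_pow, mul_one] using h
  have hcoeff := congrArg (coeff · ν) hspec
  simp only [← C_pow, coeff_C_mul, coeff_sum_C_mul_X_add_C_pow_sub_mul_X_pow A _ hν,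
    coeff_sum_C_mul_X_add_one_pow_sub] at hcoeff
  rw [← hcoeff, ← mul_assoc, ← inv_sqrt_pow_mul_pow_sub hq0 hν]
  push_cast
  ring

theorem binomial_moments (q : ℝ) (hq0 : 0 < q) (hq1 : q ≠ 1) (n : ℕ)
    (A : ℕ → ℂ) (hA0 : A 0 = 1) (W : Cxy)
    (hW : W = ∑ i ∈ Finset.range (n + 1),
      MvPolynomial.C (A i) * MvPolynomial.X 0 ^ (n - i) * MvPolynomial.X 1 ^ i)
    (hinv : actSigma q W = W) :
    ∀ ν ≤ n,
      ∑ i ∈ Finset.range (n - ν + 1), ((n - i).choose ν : ℂ) * A i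
        = ((q ^ ((n : ℝ) / 2 - (ν : ℝ)) : ℝ) : ℂ) *
            ∑ i ∈ Finset.range (ν + 1), ((n - i).choose (n - ν) : ℂ) * A i :=
  binomial_moments_general q hq0 n A W hW hinv

end
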